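/- arXiv:2601.18041 — 2 statements merged into one kernel-verified Lean document; each statement's English description precedes it below -/
import Mathlib

section
/- Grassmannian intertwining property: Let Ω be an nc set over Gr^{(d;m)}(A) and f : Ω → M(B) a graded function. Then f is nc (i.e. direct-sum-preserving and similarity-preserving) if and only if f satisfies: for all n, n' ≥ 1, T ∈ M_{n,n'}(R), σ ∈ Ω_n, σ' ∈ Ω_{n'}, whenever [[I_n, T],[0, I_{n'}]] · (σ ⊕ σ') = σ ⊕ σ', one has f(σ)T = Tf(σ'). -/
open Matrix

/-- `n × n` matrices over `A`. -/
abbrev Mat (A : Type) (n : ℕ) : Type := Matrix (Fin n) (Fin n) A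

/-- `m × m` block matrices with `n × n` blocks over `A`, i.e. `M_m(M_n(A))`. -/
abbrev BMat (A : Type) (m n : ℕ) : Type := Matrix (Fin m) (Fin m) (Mat A n)

section NC

variable {R : Type} [CommRing R] {A : Type} [Ring A]

/-- Membership in the subgroup `H^{(d;m)}_n(A)` of invertible block lower-triangular
matrices `[[X,0],[Y,Z]]` with `X ∈ GL_{m-d}`, `Z ∈ GL_d`. -/
def memH (m d n : ℕ) (hd : d ≤ m) (Γ : BMat A m n) : Prop :=
  IsUnit Γ ∧
  (∀ i j : Fin m, (i : ℕ) < m - d → m - d ≤ (j : ℕ) → Γ i j = 0) ∧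
  IsUnit (Matrix.of fun i j : Fin (m - d) =>
    Γ ⟨(i : ℕ), lt_of_lt_of_le i.isLt (Nat.sub_le m d)⟩
      ⟨(j : ℕ), lt_of_lt_of_le j.isLt (Nat.sub_le m d)⟩) ∧
  IsUnit (Matrix.of fun i j : Fin d =>
    Γ ⟨m - d + (i : ℕ), by have := i.isLt; omega⟩
      ⟨m - d + (j : ℕ), by have := j.isLt; omega⟩)

/-- The relation `X ~ Y` iff `X = Y Γ` for some `Γ ∈ H^{(d;m)}_n(A)`. -/
def grel (m d n : ℕ) (hd : d ≤ m) (X Y : BMat A m n) : Prop :=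
  ∃ Γ : BMat A m n, memH m d n hd Γ ∧ X = Y * Γ

/-- Direct sum of square matrices. -/
def dsumMat {n n' : ℕ} (X : Mat A n) (Y : Mat A n') : Mat A (n + n') :=
  Matrix.reindex finSumFinEquiv finSumFinEquiv (Matrix.fromBlocks X 0 0 Y)

/-- Entrywise block direct sum `X ⊕̃ Y` of elements of `M_m(M_n(A))`, `M_m(M_{n'}(A))`. -/
def dsum {m n n' : ℕ} (X : BMat A m n) (Y : BMat A m n') : BMat A m (n + n') :=
  Matrix.of fun i j => dsumMat (X i j) (Y i j)

/-- Direct sum of square matrices with entries in a module. -/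
def dsumW {W : Type} [AddCommMonoid W] {n n' : ℕ}
    (X : Matrix (Fin n) (Fin n) W) (Y : Matrix (Fin n') (Fin n') W) :
    Matrix (Fin (n + n')) (Fin (n + n')) W :=
  Matrix.reindex finSumFinEquiv finSumFinEquiv (Matrix.fromBlocks X 0 0 Y)

/-- Block upper triangular matrix `[[P, H],[0, Q]]`. -/
def triW {W : Type} [AddCommMonoid W] {n n' : ℕ}
    (P : Matrix (Fin n) (Fin n) W) (H : Matrix (Fin n) (Fin n') W)
    (Q : Matrix (Fin n') (Fin n') W) :
    Matrix (Fin (n + n')) (Fin (n + n')) W :=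
  Matrix.reindex finSumFinEquiv finSumFinEquiv (Matrix.fromBlocks P H 0 Q)

/-- The unipotent upper triangular matrix `[[I, T],[0, I]]` over `R`. -/
def uptri (R : Type) [CommRing R] {p q : ℕ} (T : Matrix (Fin p) (Fin q) R) :
    Matrix (Fin (p + q)) (Fin (p + q)) R :=
  Matrix.reindex finSumFinEquiv finSumFinEquiv (Matrix.fromBlocks 1 T 0 1)

/-- Left multiplication of a representative by `s^{⊕ m}` for a scalar matrix `s` over `R`:
the similarity action on the nc Grassmannian. -/
def simAct [Algebra R A] {m N : ℕ} (s : Matrix (Fin N) (Fin N) R) (X : BMat A m N) :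
    BMat A m N :=
  Matrix.of fun i j => s.map (algebraMap R A) * X i j

/-- Multiplication of a matrix over an `R`-module `W` by a matrix over `R` on the left. -/
def rmulL {W : Type} [AddCommMonoid W] [Module R W] {p q r : ℕ}
    (s : Matrix (Fin p) (Fin q) R) (X : Matrix (Fin q) (Fin r) W) :
    Matrix (Fin p) (Fin r) W :=
  Matrix.of fun i j => ∑ k, s i k • X k j

/-- Multiplication of a matrix over an `R`-module `W` by a matrix over `R` on the right. -/
def rmulR {W : Type} [AddCommMonoid W] [Module R W] {p q r : ℕ}
    (X : Matrix (Fin p) (Fin q) W) (s : Matrix (Fin q) (Fin r) R) :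
    Matrix (Fin p) (Fin r) W :=
  Matrix.of fun i j => ∑ k, s k j • X i k

/-- Vertical concatenation of matrices. -/
def vcat {α : Type} {p p' q : ℕ} (X : Matrix (Fin p) (Fin q) α)
    (Y : Matrix (Fin p') (Fin q) α) : Matrix (Fin (p + p')) (Fin q) α :=
  Matrix.of fun i j =>
    if h : (i : ℕ) < p then X ⟨(i : ℕ), h⟩ j
    else Y ⟨(i : ℕ) - p, by have := i.isLt; omega⟩ j

/-- The affine embedding `X ↦ [[0, I],[I, X]]` in the case `(d;m) = (1;2)`. -/
def affEmb {n : ℕ} (X : Mat A n) : BMat A 2 n := !![0, 1; 1, X]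

/-- The matrix `[[0, X],[0, 0]] ∈ M_{n+n'}(A)` with `X ∈ M_{n,n'}(A)` in the upper right
corner. -/
def cornerMat {n n' : ℕ} (X : Matrix (Fin n) (Fin n') A) : Mat A (n + n') :=
  Matrix.reindex finSumFinEquiv finSumFinEquiv (Matrix.fromBlocks 0 X 0 0)

/-- The representative `(P;Q)_{u,v}(X)` of the element `(σ;σ')_{u,v}(X)`:
`P ⊕̃ Q + Σ_{j=1}^d [[0, X Q_{v, m-d+j}],[0,0]] ⊗ e^{(m)}_{d+u, m-d+j}`. -/
def ins {m d n n' : ℕ} (hd : d ≤ m) (u : Fin (m - d)) (v : Fin d)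
    (P : BMat A m n) (Q : BMat A m n') (X : Matrix (Fin n) (Fin n') A) :
    BMat A m (n + n') :=
  dsum P Q + Matrix.of fun (i j : Fin m) =>
    if (i : ℕ) = d + (u : ℕ) ∧ m - d ≤ (j : ℕ) then
      cornerMat (X * Q ⟨(v : ℕ), lt_of_lt_of_le v.isLt hd⟩ j)
    else 0

/-- The matrix unit `e^{(md,d)}_{u,v} ⊗ X`. -/
def eMat {md d : ℕ} {n : ℕ} (u : Fin md) (v : Fin d) (X : Mat A n) :
    Matrix (Fin md) (Fin d) (Mat A n) :=
  Matrix.of fun i j => if i = u ∧ j = v then X else 0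

/-- The block matrix `[[I_d ⊗ I_n, 0],[-Y, I_{m-d} ⊗ I_n]]` used to define `σ(Y)`. -/
def shiftMat {m d n : ℕ} (hd : d ≤ m) (Y : Matrix (Fin (m - d)) (Fin d) (Mat A n)) :
    BMat A m n :=
  Matrix.of fun i j =>
    (if i = j then (1 : Mat A n) else 0) +
    (if h : d ≤ (i : ℕ) ∧ (j : ℕ) < d then
      -Y ⟨(i : ℕ) - d, by have := i.isLt; omega⟩ ⟨(j : ℕ), h.2⟩
    else 0)

/-- A family `C` of sets of representatives is an nc set over `Gr^{(d;m)}(A)`: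
it consists of invertible matrices, is saturated under the relation `~`
(i.e. it is a set of equivalence classes), and is closed under direct sums. -/
def IsNCSetCarrier {m d : ℕ} (hd : d ≤ m) (C : ∀ n, Set (BMat A m n)) : Prop :=
  (∀ n, ∀ a ∈ C n, IsUnit a) ∧
  (∀ n, ∀ a b : BMat A m n, grel m d n hd a b → (a ∈ C n ↔ b ∈ C n)) ∧
  (∀ n n', ∀ a ∈ C n, ∀ b ∈ C n', dsum a b ∈ C (n + n'))

/-- `f` is an nc function on the nc set (with carrier) `C` over `Gr^{(d;m)}(A)`:
it descends to equivalence classes, preserves direct sums, and is similarity preserving. -/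
def IsNCFun (R : Type) [CommRing R] [Algebra R A] {W : Type} [AddCommMonoid W] [Module R W]
    {m d : ℕ} (hd : d ≤ m) (C : ∀ n, Set (BMat A m n))
    (f : ∀ n, BMat A m n → Matrix (Fin n) (Fin n) W) : Prop :=
  (∀ n, ∀ a ∈ C n, ∀ b ∈ C n, grel m d n hd a b → f n a = f n b) ∧
  (∀ n n', ∀ a ∈ C n, ∀ b ∈ C n', f (n + n') (dsum a b) = dsumW (f n a) (f n' b)) ∧
  (∀ n (s : (Matrix (Fin n) (Fin n) R)ˣ), ∀ a ∈ C n,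
    simAct (s : Matrix (Fin n) (Fin n) R) a ∈ C n →
    f n (simAct (s : Matrix (Fin n) (Fin n) R) a) =
      rmulR (rmulL (s : Matrix (Fin n) (Fin n) R) (f n a))
        ((s⁻¹ : (Matrix (Fin n) (Fin n) R)ˣ) : Matrix (Fin n) (Fin n) R))

/-- `(u,v)`-admissibility of an nc set. -/
def Admissible (R : Type) [CommRing R] [Algebra R A] {m d : ℕ} (hd : d ≤ m)
    (C : ∀ n, Set (BMat A m n)) (u : Fin (m - d)) (v : Fin d) : Prop :=
  ∀ n n' (a : BMat A m n) (b : BMat A m n') (X : Matrix (Fin n) (Fin n') A),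
    a ∈ C n → b ∈ C n' →
    ∃ r : Rˣ, ins hd u v a b ((r : R) • X) ∈ C (n + n')

/-- The similarity-invariant envelope of an nc set. -/
def envC (R : Type) [CommRing R] [Algebra R A] {m d : ℕ} (hd : d ≤ m)
    (C : ∀ n, Set (BMat A m n)) : ∀ n, Set (BMat A m n) :=
  fun n => {x | ∃ (s : (Matrix (Fin n) (Fin n) R)ˣ) (a : BMat A m n),
    a ∈ C n ∧ grel m d n hd x (simAct (s : Matrix (Fin n) (Fin n) R) a)}

end NC

section Res

variable {R : Type} [CommRing R] {A : Type} [Ring A] [Algebra R A]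

/-- Entrywise inclusion `M_m(M_n(B)) → M_m(M_n(A))` for a subalgebra `B ⊆ A`. -/
def bmap (D : Subalgebra R A) {m n : ℕ} (b : BMat (↥D) m n) : BMat A m n :=
  Matrix.of fun i j => (b i j).map (fun x => (x : A))

/-- Entrywise inclusion for rectangular matrices over a subalgebra. -/
def rcmap (D : Subalgebra R A) {n n' : ℕ} (X : Matrix (Fin n) (Fin n') ↥D) :
    Matrix (Fin n) (Fin n') A :=
  X.map (fun x => (x : A))

/-- `X` is invertible in `M_m(M_n(B))` for the subalgebra `B = D ⊆ A`. -/
def invIn (D : Subalgebra R A) {m n : ℕ} (X : BMat A m n) : Prop :=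
  (∀ i j k l, X i j k l ∈ D) ∧
  ∃ Y : BMat A m n, (∀ i j k l, Y i j k l ∈ D) ∧ X * Y = 1 ∧ Y * X = 1

/-- The amplification `a^{⊕̃ n}` of an element `a ∈ M_m(A) = M_m(M_1(A))`. -/
def ampl {m : ℕ} (a : BMat A m 1) (n : ℕ) : BMat A m n :=
  Matrix.of fun i j => Matrix.diagonal (fun _ => a i j 0 0)

/-- The matrix `r^{(d;m)}(P;Q)`: first `m-d` block columns are the last `m-d` block
columns of `P`, last `d` block columns are the last `d` block columns of `Q`. -/
def rmat {m d n : ℕ} (hd : d ≤ m) (P Q : BMat A m n) : BMat A m n :=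
  Matrix.of fun i j =>
    if h : (j : ℕ) < m - d then P i ⟨d + (j : ℕ), by omega⟩ else Q i j

/-- The value `[B_{v,m-d+1},…,B_{v,m}] ⋅ ζ_u` of the `(d;m)`-Grassmannian resolvent,
where `ζ_u` is the `u`-th bottom block column of the inverse `Rinv` of an `r`-matrix. -/
def resVal {m d n : ℕ} (hd : d ≤ m) (v : Fin d) (u : Fin (m - d))
    (Bm Rinv : BMat A m n) : Mat A n :=
  ∑ j : Fin d,
    Bm ⟨(v : ℕ), lt_of_lt_of_le v.isLt hd⟩ ⟨m - d + (j : ℕ), by have := j.isLt; omega⟩ *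
    Rinv ⟨m - d + (j : ℕ), by have := j.isLt; omega⟩ ⟨d + (u : ℕ), by have := u.isLt; omega⟩

/-- Membership in the `(d;m)`-Grassmannian `B`-resolvent set of `π` (represented by `p`):
`b` represents an element of `Gr^{(d;m)}_n(B)` such that `π^{⊕n}` and `b` are
transversal in `A`. -/
def ResMem {m d : ℕ} (hd : d ≤ m) (p : BMat A m 1) (D : Subalgebra R A) {n : ℕ}
    (b : BMat (↥D) m n) : Prop :=
  IsUnit b ∧ IsUnit (rmat hd (ampl p n) (bmap D b))

end Res

/-!
The key observation: if `T ∈ M_{n,n'}(R)` and `X ∈ M_{n,n'}(A)` satisfy `T σ'ᵢⱼ = σᵢⱼ X` for all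
blocks, then `[[I, T], [0, I]] · (σ ⊕ σ') = (σ ⊕ σ') · diag([[I, X], [0, I]])`, and the right
factor lies in `H`, so `[[I, T], [0, I]]` fixes the class of `σ ⊕ σ'`.

If `f` is nc, then `f(σ ⊕ σ') = f(σ) ⊕ f(σ')` commutes with every `[[I, T], [0, I]]` fixing that
class, and the upper right corner of this commutation is `f(σ) T = T f(σ')`. Conversely, the
column inclusions `[I; 0]` and `[0; I]` (with `X = T`) intertwine `σ ⊕ σ'` with `σ` and `σ'`,
which gives the two block columns of `f(σ ⊕ σ')`, and `T = s`, `X = I` intertwine `s · σ` with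
`σ`, which gives `f(s · σ) s = s f(σ)`.
-/

section ModuleMatrix

variable {R : Type} [CommRing R] {W : Type} [AddCommMonoid W] [Module R W]

lemma rmulR_one {p q : ℕ} (X : Matrix (Fin p) (Fin q) W) :
    rmulR X (1 : Matrix (Fin q) (Fin q) R) = X := by
  ext i j
  simp [rmulR, Matrix.one_apply]

lemma rmulR_rmulR {p q r t : ℕ} (X : Matrix (Fin p) (Fin q) W)
    (s : Matrix (Fin q) (Fin r) R) (s' : Matrix (Fin r) (Fin t) R) :
    rmulR (rmulR X s) s' = rmulR X (s * s') := by
  ext i j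
  simp only [rmulR, Matrix.of_apply, Matrix.mul_apply, Finset.smul_sum, smul_smul,
    Finset.sum_smul]
  rw [Finset.sum_comm]
  simp only [mul_comm]

lemma rmulR_eq_rmulL_of_conj_eq {p : ℕ} (s : (Matrix (Fin p) (Fin p) R)ˣ)
    {X : Matrix (Fin p) (Fin p) W}
    (h : rmulR (rmulL (s : Matrix _ _ R) X) (↑s⁻¹ : Matrix _ _ R) = X) :
    rmulR X (s : Matrix _ _ R) = rmulL (s : Matrix _ _ R) X := by
  conv_lhs => rw [← h]
  rw [rmulR_rmulR, Units.inv_mul, rmulR_one]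

lemma rmulR_dsumW_uptri {n n' : ℕ} (P : Matrix (Fin n) (Fin n) W)
    (Q : Matrix (Fin n') (Fin n') W) (T : Matrix (Fin n) (Fin n') R) :
    rmulR (dsumW P Q) (uptri R T) = triW P (rmulR P T) Q := by
  ext I J
  obtain ⟨x, rfl⟩ := finSumFinEquiv.surjective I
  obtain ⟨y, rfl⟩ := finSumFinEquiv.surjective J
  rcases x with i | i <;> rcases y with j | j <;>
    simp [rmulR, dsumW, triW, uptri, ← finSumFinEquiv.sum_comp, Matrix.one_apply]

lemma rmulL_uptri_dsumW {n n' : ℕ} (P : Matrix (Fin n) (Fin n) W)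
    (Q : Matrix (Fin n') (Fin n') W) (T : Matrix (Fin n) (Fin n') R) :
    rmulL (uptri R T) (dsumW P Q) = triW P (rmulL T Q) Q := by
  ext I J
  obtain ⟨x, rfl⟩ := finSumFinEquiv.surjective I
  obtain ⟨y, rfl⟩ := finSumFinEquiv.surjective J
  rcases x with i | i <;> rcases y with j | j <;>
    simp [rmulL, dsumW, triW, uptri, ← finSumFinEquiv.sum_comp, Matrix.one_apply]

end ModuleMatrix

lemma triW_corner_injective {W : Type} [AddCommMonoid W] {n n' : ℕ}
    (P : Matrix (Fin n) (Fin n) W) (Q : Matrix (Fin n') (Fin n') W) :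
    Function.Injective fun H : Matrix (Fin n) (Fin n') W => triW P H Q :=
  fun _ _ h => (Matrix.fromBlocks_inj.mp ((Matrix.reindex _ _).injective h)).2.1

section Uptri

variable {R : Type} [CommRing R]

lemma uptri_mul_uptri {p q : ℕ} (T T' : Matrix (Fin p) (Fin q) R) :
    uptri R T * uptri R T' = uptri R (T + T') := by
  rw [uptri, uptri, uptri, Matrix.reindex_apply, Matrix.reindex_apply, Matrix.reindex_apply,
    Matrix.submatrix_mul_equiv, Matrix.fromBlocks_multiply]
  simp [add_comm]

lemma uptri_zero {p q : ℕ} : uptri R (0 : Matrix (Fin p) (Fin q) R) = 1 := by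
  simp [uptri, Matrix.fromBlocks_one]

def uptriUnit {p q : ℕ} (T : Matrix (Fin p) (Fin q) R) :
    (Matrix (Fin (p + q)) (Fin (p + q)) R)ˣ where
  val := uptri R T
  inv := uptri R (-T)
  val_inv := by rw [uptri_mul_uptri, add_neg_cancel, uptri_zero]
  inv_val := by rw [uptri_mul_uptri, neg_add_cancel, uptri_zero]

end Uptri

def inlMat (α : Type) [Zero α] [One α] (n n' : ℕ) : Matrix (Fin (n + n')) (Fin n) α :=
  (Matrix.fromRows 1 0).submatrix finSumFinEquiv.symm id

def inrMat (α : Type) [Zero α] [One α] (n n' : ℕ) : Matrix (Fin (n + n')) (Fin n') α :=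
  (Matrix.fromRows 0 1).submatrix finSumFinEquiv.symm id

section Inclusions

variable {α β : Type} {n n' : ℕ}

lemma map_inlMat [Semiring α] [Semiring β] (g : α →+* β) :
    (inlMat α n n').map g = inlMat β n n' := by
  ext I j
  obtain ⟨x | x, rfl⟩ := finSumFinEquiv.surjective I <;> simp [inlMat, Matrix.one_apply]

lemma map_inrMat [Semiring α] [Semiring β] (g : α →+* β) :
    (inrMat α n n').map g = inrMat β n n' := by
  ext I j
  obtain ⟨x | x, rfl⟩ := finSumFinEquiv.surjective I <;> simp [inrMat, Matrix.one_apply]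

lemma dsumMat_mul_inlMat [Ring α] (P : Mat α n) (Q : Mat α n') :
    dsumMat P Q * inlMat α n n' = inlMat α n n' * P := by
  ext I j
  obtain ⟨x | x, rfl⟩ := finSumFinEquiv.surjective I <;>
    simp [dsumMat, inlMat, Matrix.mul_apply, ← finSumFinEquiv.sum_comp, Matrix.one_apply]

lemma dsumMat_mul_inrMat [Ring α] (P : Mat α n) (Q : Mat α n') :
    dsumMat P Q * inrMat α n n' = inrMat α n n' * Q := by
  ext I j
  obtain ⟨x | x, rfl⟩ := finSumFinEquiv.surjective I <;>
    simp [dsumMat, inrMat, Matrix.mul_apply, ← finSumFinEquiv.sum_comp, Matrix.one_apply]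

end Inclusions

lemma eq_dsumW_of_rmulR_inlMat_of_rmulR_inrMat {R : Type} [CommRing R] {W : Type}
    [AddCommMonoid W] [Module R W] {n n' : ℕ} {F : Mat W (n + n')}
    {P : Mat W n} {Q : Mat W n'}
    (hl : rmulR F (inlMat R n n') = rmulL (inlMat R n n') P)
    (hr : rmulR F (inrMat R n n') = rmulL (inrMat R n n') Q) :
    F = dsumW P Q := by
  ext I J
  obtain ⟨x, rfl⟩ := finSumFinEquiv.surjective I
  obtain ⟨j | j, rfl⟩ := finSumFinEquiv.surjective J
  · have h := congrFun (congrFun hl (finSumFinEquiv x)) j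
    rcases x with i | i <;>
      simpa [rmulR, rmulL, inlMat, dsumW, ← finSumFinEquiv.sum_comp, Matrix.one_apply] using h
  · have h := congrFun (congrFun hr (finSumFinEquiv x)) j
    rcases x with i | i <;>
      simpa [rmulR, rmulL, inrMat, dsumW, ← finSumFinEquiv.sum_comp, Matrix.one_apply] using h

section Equivalence

variable {R : Type} [CommRing R] {A : Type} [Ring A] [Algebra R A]

lemma isUnit_unipotent {n n' : ℕ} (X : Matrix (Fin n) (Fin n') A) :
    IsUnit (Matrix.reindex finSumFinEquiv finSumFinEquiv
      (Matrix.fromBlocks (1 : Mat A n) X 0 (1 : Mat A n'))) := by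
  refine IsUnit.map (Matrix.reindexRingEquiv A finSumFinEquiv)
    ⟨⟨Matrix.fromBlocks (1 : Mat A n) X 0 (1 : Mat A n'), Matrix.fromBlocks 1 (-X) 0 1, ?_, ?_⟩,
      rfl⟩ <;>
    simp [Matrix.fromBlocks_multiply, Matrix.fromBlocks_one]

lemma memH_diagonal {m d N : ℕ} (hd : d ≤ m) {c : Mat A N} (hc : IsUnit c) :
    memH m d N hd (Matrix.diagonal fun _ : Fin m => c) := by
  have hdiag : ∀ p, IsUnit (Matrix.diagonal fun _ : Fin p => c) := fun p => by
    simpa using hc.map (Matrix.scalar (Fin p))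
  refine ⟨hdiag m, fun i j hi hj => Matrix.diagonal_apply_ne _ (by omega), ?_, ?_⟩
  · convert hdiag (m - d) using 1
    ext i j : 2
    simp [Matrix.diagonal_apply, Fin.ext_iff]
  · convert hdiag d using 1
    ext i j : 2
    simp [Matrix.diagonal_apply, Fin.ext_iff]

lemma grel_simAct_of_forall_mul_eq {m d N : ℕ} (hd : d ≤ m) {t : Matrix (Fin N) (Fin N) R}
    {Y : BMat A m N} {c : Mat A N} (hc : IsUnit c)
    (h : ∀ i j, t.map (algebraMap R A) * Y i j = Y i j * c) :
    grel m d N hd (simAct t Y) Y :=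
  ⟨Matrix.diagonal fun _ => c, memH_diagonal hd hc,
    Matrix.ext fun i j => by rw [Matrix.mul_diagonal]; exact h i j⟩

lemma grel_simAct_uptri_dsum {m d n n' : ℕ} (hd : d ≤ m) {T : Matrix (Fin n) (Fin n') R}
    {a : BMat A m n} {b : BMat A m n'} (X : Matrix (Fin n) (Fin n') A)
    (h : ∀ i j, T.map (algebraMap R A) * b i j = a i j * X) :
    grel m d (n + n') hd (simAct (uptri R T) (dsum a b)) (dsum a b) := by
  refine grel_simAct_of_forall_mul_eq hd (isUnit_unipotent X) fun i j => ?_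
  simp only [uptri, dsum, dsumMat, Matrix.of_apply, Matrix.reindex_apply,
    ← Matrix.submatrix_map, Matrix.fromBlocks_map, Matrix.submatrix_mul_equiv,
    Matrix.fromBlocks_multiply]
  simp [h i j]

end Equivalence

section Intertwining

variable {R : Type} [CommRing R] {A : Type} [Ring A] [Algebra R A]
  {W : Type} [AddCommMonoid W] [Module R W] {m d : ℕ} {hd : d ≤ m}
  {C : ∀ n, Set (BMat A m n)} {f : ∀ n, BMat A m n → Matrix (Fin n) (Fin n) W}

variable (R hd C f) in
def HasIntertwiningProperty : Prop :=
  ∀ n n' (T : Matrix (Fin n) (Fin n') R), ∀ a ∈ C n, ∀ b ∈ C n',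
    grel m d (n + n') hd (simAct (uptri R T) (dsum a b)) (dsum a b) →
    rmulR (f n a) T = rmulL T (f n' b)

theorem IsNCFun.hasIntertwiningProperty (hf : IsNCFun R hd C f) (hC : IsNCSetCarrier hd C) :
    HasIntertwiningProperty R hd C f := by
  obtain ⟨hresp, hdsum, hsim⟩ := hf
  intro n n' T a ha b hb hT
  have hab : dsum a b ∈ C (n + n') := hC.2.2 n n' a ha b hb
  have hTab : simAct (uptri R T) (dsum a b) ∈ C (n + n') := (hC.2.1 _ _ _ hT).2 hab
  have hcomm : rmulR (f _ (dsum a b)) (uptri R T) = rmulL (uptri R T) (f _ (dsum a b)) :=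
    rmulR_eq_rmulL_of_conj_eq (uptriUnit T)
      ((hsim _ (uptriUnit T) _ hab hTab).symm.trans (hresp _ _ hTab _ hab hT))
  rw [hdsum n n' a ha b hb, rmulR_dsumW_uptri, rmulL_uptri_dsumW] at hcomm
  exact triW_corner_injective _ _ hcomm

theorem HasIntertwiningProperty.map_dsum (h : HasIntertwiningProperty R hd C f)
    (hC : IsNCSetCarrier hd C) {n n' : ℕ} {a : BMat A m n} (ha : a ∈ C n)
    {b : BMat A m n'} (hb : b ∈ C n') :
    f (n + n') (dsum a b) = dsumW (f n a) (f n' b) := by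
  have hab : dsum a b ∈ C (n + n') := hC.2.2 n n' a ha b hb
  apply eq_dsumW_of_rmulR_inlMat_of_rmulR_inrMat (R := R)
  · refine h _ _ _ _ hab _ ha (grel_simAct_uptri_dsum hd (inlMat A n n') fun _ _ => ?_)
    rw [map_inlMat]
    exact (dsumMat_mul_inlMat _ _).symm
  · refine h _ _ _ _ hab _ hb (grel_simAct_uptri_dsum hd (inrMat A n n') fun _ _ => ?_)
    rw [map_inrMat]
    exact (dsumMat_mul_inrMat _ _).symm

theorem HasIntertwiningProperty.map_simAct (h : HasIntertwiningProperty R hd C f)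
    {n : ℕ} (s : (Matrix (Fin n) (Fin n) R)ˣ) {a : BMat A m n} (ha : a ∈ C n)
    (hsa : simAct (s : Matrix (Fin n) (Fin n) R) a ∈ C n) :
    f n (simAct (s : Matrix (Fin n) (Fin n) R) a) =
      rmulR (rmulL (s : Matrix (Fin n) (Fin n) R) (f n a))
        (↑s⁻¹ : Matrix (Fin n) (Fin n) R) := by
  have hs := h n n _ _ hsa a ha (grel_simAct_uptri_dsum hd 1 fun _ _ => (mul_one _).symm)
  rw [← hs, rmulR_rmulR, Units.mul_inv, rmulR_one]

theorem HasIntertwiningProperty.isNCFun (h : HasIntertwiningProperty R hd C f)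
    (hC : IsNCSetCarrier hd C)
    (hresp : ∀ n, ∀ a ∈ C n, ∀ b ∈ C n, grel m d n hd a b → f n a = f n b) :
    IsNCFun R hd C f :=
  ⟨hresp, fun _ _ _ ha _ hb => h.map_dsum hC ha hb, fun _ s _ ha hsa => h.map_simAct s ha hsa⟩

end Intertwining

theorem grassmann_intertwining_general {R : Type} [CommRing R] {A : Type} [Ring A] [Algebra R A]
    {W : Type} [AddCommMonoid W] [Module R W]
    (m d : ℕ) (hd : d ≤ m)
    (C : ∀ n, Set (BMat A m n)) (hC : IsNCSetCarrier hd C)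
    (f : ∀ n, BMat A m n → Matrix (Fin n) (Fin n) W)
    (hresp : ∀ n, ∀ a ∈ C n, ∀ b ∈ C n, grel m d n hd a b → f n a = f n b) :
    IsNCFun R hd C f ↔
      (∀ n n' (T : Matrix (Fin n) (Fin n') R), ∀ a ∈ C n, ∀ b ∈ C n',
        grel m d (n + n') hd (simAct (uptri R T) (dsum a b)) (dsum a b) →
        rmulR (f n a) T = rmulL T (f n' b)) :=
  ⟨fun hf => hf.hasIntertwiningProperty hC, fun h => HasIntertwiningProperty.isNCFun h hC hresp⟩

/-- Grassmannian intertwining property. -/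
theorem grassmann_intertwining {R : Type} [CommRing R] {A : Type} [Ring A] [Algebra R A]
    {W : Type} [AddCommMonoid W] [Module R W]
    (m d : ℕ) (hd1 : 1 ≤ d) (hd : d ≤ m)
    (C : ∀ n, Set (BMat A m n)) (hC : IsNCSetCarrier hd C)
    (f : ∀ n, BMat A m n → Matrix (Fin n) (Fin n) W)
    (hresp : ∀ n, ∀ a ∈ C n, ∀ b ∈ C n, grel m d n hd a b → f n a = f n b) :
    IsNCFun R hd C f ↔
      (∀ n n' (T : Matrix (Fin n) (Fin n') R), ∀ a ∈ C n, ∀ b ∈ C n',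
        grel m d (n + n') hd (simAct (uptri R T) (dsum a b)) (dsum a b) →
        rmulR (f n a) T = rmulL T (f n' b)) :=
  grassmann_intertwining_general m d hd C hC f hresp
end

section
/- The element (σ;σ')_{u,v}(X) of the nc Grassmannian is independent of the choice of representatives: if A, B ∈ σ and A', B' ∈ σ', then (A;A')_{u,v}(X) ~ (B;B')_{u,v}(X) in GL_m(M_{n+n'}(A)). -/
open Matrix

/-!
The correction term of `(a;a')_{u,v}(X)` is `C D (1 - Π)`, where `D = a ⊕̃ a'`,
`C = e_{d+u,v} ⊗ [[0, X], [0, 0]]` and `Π` projects onto the first `m - d` block columns.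
Since `C D' C = 0` for every entrywise direct sum `D'`, it factors as `(1 + C) D (1 - M)` with
`M = D⁻¹ C D Π` square-zero and vanishing on the last `d` block columns, so that `1 ± M ∈ H`.
Hence `(a;a')_{u,v}(X) ~ (1 + C) D`, and replacing `a, a'` by `b Γ, b' Γ'` only multiplies `D`
on the right by `Γ ⊕̃ Γ' ∈ H`.
-/

section DirectSum

variable {A : Type} [Ring A] {n n' : ℕ}

def dsumMatHom : Mat A n × Mat A n' →+* Mat A (n + n') where
  toFun p := dsumMat p.1 p.2
  map_one' := by simp [dsumMat, fromBlocks_one]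
  map_mul' p q := by
    simp only [dsumMat, ← coe_reindexRingEquiv, ← map_mul, fromBlocks_multiply]
    simp
  map_zero' := by simp [dsumMat]
  map_add' p q := by
    simp only [dsumMat, ← coe_reindexRingEquiv, ← map_add, fromBlocks_add, add_zero,
      Prod.fst_add, Prod.snd_add]

lemma dsumMatHom_apply (P : Mat A n) (Q : Mat A n') : dsumMatHom (P, Q) = dsumMat P Q := rfl

@[simp]
lemma dsumMat_zero : dsumMat (0 : Mat A n) (0 : Mat A n') = 0 := map_zero dsumMatHom

@[simp]
lemma dsumMat_one : dsumMat (1 : Mat A n) (1 : Mat A n') = 1 := map_one dsumMatHom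

def dsumHom (ι : Type) [Fintype ι] [DecidableEq ι] :
    Matrix ι ι (Mat A n) × Matrix ι ι (Mat A n') →+* Matrix ι ι (Mat A (n + n')) where
  toFun p := of fun i j => dsumMat (p.1 i j) (p.2 i j)
  map_one' := by
    ext1 i j
    by_cases h : i = j
    · subst h; simp
    · simp [one_apply_ne h]
  map_mul' p q := by
    ext1 i j
    simp only [of_apply, mul_apply, ← dsumMatHom_apply, ← map_mul, ← map_sum]
    congr 1
    ext1 <;> simp [Prod.fst_sum, Prod.snd_sum, mul_apply]
  map_zero' := by ext1 i j; simp
  map_add' p q := by ext1 i j; simp [← dsumMatHom_apply, ← map_add]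

lemma isUnit_entrywise_dsumMat {ι : Type} [Fintype ι] [DecidableEq ι] {P : Matrix ι ι (Mat A n)}
    {Q : Matrix ι ι (Mat A n')} (hP : IsUnit P) (hQ : IsUnit Q) :
    IsUnit (of fun i j => dsumMat (P i j) (Q i j)) :=
  (Prod.isUnit_iff (x := (P, Q)).mpr ⟨hP, hQ⟩).map (dsumHom ι)

lemma dsum_one {m : ℕ} : dsum (1 : BMat A m n) (1 : BMat A m n') = 1 :=
  map_one (dsumHom (Fin m))

lemma dsum_mul {m : ℕ} (P P' : BMat A m n) (Q Q' : BMat A m n') :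
    dsum P Q * dsum P' Q' = dsum (P * P') (Q * Q') :=
  (map_mul (dsumHom (Fin m)) (P, Q) (P', Q')).symm

end DirectSum

section BlockTriangular

variable {A : Type} [Ring A] {m d N : ℕ}

def finSplit (hd : d ≤ m) : Fin (m - d) ⊕ Fin d ≃ Fin m :=
  finSumFinEquiv.trans (finCongr (Nat.sub_add_cancel hd))

lemma finSplit_inl (hd : d ≤ m) (i : Fin (m - d)) :
    finSplit hd (.inl i) = ⟨i, by omega⟩ := rfl

lemma finSplit_inr (hd : d ≤ m) (i : Fin d) :
    finSplit hd (.inr i) = ⟨m - d + i, by omega⟩ := rfl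

lemma memH_iff_exists_fromBlocks (hd : d ≤ m) (Γ : BMat A m N) :
    memH m d N hd Γ ↔ IsUnit Γ ∧ ∃ T Y Z, IsUnit T ∧ IsUnit Z ∧
      reindexRingEquiv _ (finSplit hd).symm Γ = fromBlocks T 0 Y Z := by
  set S := reindexRingEquiv _ (finSplit hd).symm Γ with hS
  have hTL : S.toBlocks₁₁ = of fun i j : Fin (m - d) => Γ ⟨i, by omega⟩ ⟨j, by omega⟩ := rfl
  have hBR : S.toBlocks₂₂ = of fun i j : Fin d => Γ ⟨m - d + i, by omega⟩ ⟨m - d + j, by omega⟩ :=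
    rfl
  constructor
  · rintro ⟨hΓ, hzero, hT, hZ⟩
    refine ⟨hΓ, S.toBlocks₁₁, S.toBlocks₂₁, S.toBlocks₂₂, hT, hZ, ?_⟩
    rw [← fromBlocks_toBlocks S]
    congr 1
    exact Matrix.ext fun i j =>
      hzero (finSplit hd (.inl i)) (finSplit hd (.inr j)) i.isLt (Nat.le_add_right _ _)
  · rintro ⟨hΓ, T, Y, Z, hT, hZ, hSblocks⟩
    refine ⟨hΓ, fun i j hi hj => ?_, ?_, ?_⟩
    · have := congrFun₂ hSblocks (.inl ⟨i, hi⟩) (.inr ⟨j - (m - d), by omega⟩)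
      simp only [hS, coe_reindexRingEquiv, reindex_apply, Equiv.symm_symm, submatrix_apply,
        finSplit_inl, finSplit_inr, fromBlocks_apply₁₂, Matrix.zero_apply] at this
      rwa [show (⟨m - d + (j - (m - d)), _⟩ : Fin m) = j from Fin.ext (by simp; omega)] at this
    · rwa [← hTL, hSblocks, toBlocks_fromBlocks₁₁]
    · rwa [← hBR, hSblocks, toBlocks_fromBlocks₂₂]

variable (hd : d ≤ m)

lemma memH_mul {Γ₁ Γ₂ : BMat A m N} (h₁ : memH m d N hd Γ₁) (h₂ : memH m d N hd Γ₂) :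
    memH m d N hd (Γ₁ * Γ₂) := by
  rw [memH_iff_exists_fromBlocks] at h₁ h₂ ⊢
  obtain ⟨hΓ₁, T₁, Y₁, Z₁, hT₁, hZ₁, hS₁⟩ := h₁
  obtain ⟨hΓ₂, T₂, Y₂, Z₂, hT₂, hZ₂, hS₂⟩ := h₂
  refine ⟨hΓ₁.mul hΓ₂, T₁ * T₂, Y₁ * T₂ + Z₁ * Y₂, Z₁ * Z₂, hT₁.mul hT₂, hZ₁.mul hZ₂, ?_⟩
  rw [map_mul, hS₁, hS₂, fromBlocks_multiply]
  simp

lemma memH_one_add {M : BMat A m N} (hcol : ∀ i j : Fin m, m - d ≤ (j : ℕ) → M i j = 0)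
    (hM : M * M = 0) : memH m d N hd (1 + M) := by
  have hnil : IsNilpotent M := ⟨2, by rw [pow_two, hM]⟩
  set S := reindexRingEquiv _ (finSplit hd).symm M with hS
  have hS_blocks : S = fromBlocks S.toBlocks₁₁ 0 S.toBlocks₂₁ 0 := by
    rw [← fromBlocks_toBlocks S]
    congr 1 <;> exact Matrix.ext fun i j => hcol _ _ (Nat.le_add_right _ _)
  have hP : S.toBlocks₁₁ * S.toBlocks₁₁ = 0 := by
    have : S * S = 0 := by rw [hS, ← map_mul, hM, map_zero]
    rw [hS_blocks, fromBlocks_multiply, ← fromBlocks_zero] at this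
    simpa using (fromBlocks_inj.mp this).1
  rw [memH_iff_exists_fromBlocks]
  refine ⟨hnil.isUnit_one_add, 1 + S.toBlocks₁₁, S.toBlocks₂₁, 1,
    IsNilpotent.isUnit_one_add ⟨2, by rw [pow_two, hP]⟩, isUnit_one, ?_⟩
  rw [map_add, map_one, ← hS, hS_blocks, ← fromBlocks_one, fromBlocks_add]
  simp

lemma memH_dsum {n n' : ℕ} {Γ : BMat A m n} {Γ' : BMat A m n'} (h : memH m d n hd Γ)
    (h' : memH m d n' hd Γ') : memH m d (n + n') hd (dsum Γ Γ') := by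
  obtain ⟨hΓ, hzero, hT, hZ⟩ := h
  obtain ⟨hΓ', hzero', hT', hZ'⟩ := h'
  refine ⟨isUnit_entrywise_dsumMat hΓ hΓ', fun i j hi hj => ?_, isUnit_entrywise_dsumMat hT hT',
    isUnit_entrywise_dsumMat hZ hZ'⟩
  simp [dsum, hzero i j hi hj, hzero' i j hi hj]

end BlockTriangular

section Insertion

variable {A : Type} [Ring A] {m d n n' : ℕ}

lemma cornerMat_mul_dsumMat (X : Matrix (Fin n) (Fin n') A) (P : Mat A n) (Q : Mat A n') :
    cornerMat X * dsumMat P Q = cornerMat (X * Q) := by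
  simp only [cornerMat, dsumMat, reindex_apply, submatrix_mul_equiv, fromBlocks_multiply]
  simp

lemma cornerMat_mul_cornerMat (X Y : Matrix (Fin n) (Fin n') A) :
    cornerMat X * cornerMat Y = 0 := by
  simp only [cornerMat, reindex_apply, submatrix_mul_equiv, fromBlocks_multiply]
  simp

def insCorner (hd : d ≤ m) (u : Fin (m - d)) (v : Fin d) (X : Matrix (Fin n) (Fin n') A) :
    BMat A m (n + n') :=
  single ⟨d + u, by omega⟩ ⟨v, by omega⟩ (cornerMat X)

def headProj (m d N : ℕ) : BMat A m N := diagonal fun j => if (j : ℕ) < m - d then 1 else 0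

variable (hd : d ≤ m) (u : Fin (m - d)) (v : Fin d) (X : Matrix (Fin n) (Fin n') A)

lemma insCorner_mul_dsum_mul_insCorner (P : BMat A m n) (Q : BMat A m n') :
    insCorner hd u v X * dsum P Q * insCorner hd u v X = 0 := by
  simp [insCorner, dsum, cornerMat_mul_dsumMat, cornerMat_mul_cornerMat]

lemma insCorner_mul_self : insCorner hd u v X * insCorner hd u v X = 0 := by
  simpa [dsum_one] using insCorner_mul_dsum_mul_insCorner hd u v X 1 1

lemma dsum_headProj :
    dsum (headProj m d n : BMat A m n) (headProj m d n') = headProj m d (n + n') := by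
  ext1 i j
  by_cases h : i = j
  · subst h; by_cases hi : (i : ℕ) < m - d <;> simp [dsum, headProj, hi]
  · simp [dsum, headProj, h]

lemma ins_eq (a : BMat A m n) (a' : BMat A m n') :
    ins hd u v a a' X = dsum a a' + insCorner hd u v X * dsum a a'
      - insCorner hd u v X * dsum a a' * headProj m d (n + n') := by
  ext1 i j
  by_cases hi : i = ⟨d + u, by omega⟩
  · subst hi
    by_cases hj : (j : ℕ) < m - d
    · simp [ins, insCorner, headProj, dsum, cornerMat_mul_dsumMat, hj, show ¬m ≤ j + d by omega]
    · simp [ins, insCorner, headProj, dsum, cornerMat_mul_dsumMat, hj, show m ≤ j + d by omega]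
  · have hi' : (i : ℕ) ≠ d + u := fun h => hi (Fin.ext h)
    simp [ins, insCorner, headProj, hi, hi']

lemma ins_eq_mul {a a₁ : BMat A m n} {a' a₁' : BMat A m n'} (h : a * a₁ = 1) (h' : a' * a₁' = 1) :
    ins hd u v a a' X = (1 + insCorner hd u v X) * dsum a a' *
      (1 - dsum a₁ a₁' * insCorner hd u v X * dsum a a' * headProj m d (n + n')) := by
  set C := insCorner hd u v X
  set D := dsum a a'
  have hD : D * dsum a₁ a₁' = 1 := by rw [dsum_mul, h, h', dsum_one]
  have expand : (1 + C) * D * (1 - dsum a₁ a₁' * C * D * headProj m d (n + n')) =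
      D + C * D - (D * dsum a₁ a₁') * C * D * headProj m d (n + n')
        - C * (D * dsum a₁ a₁') * C * D * headProj m d (n + n') := by
    noncomm_ring
  rw [ins_eq, expand, hD, one_mul, mul_one, insCorner_mul_self, zero_mul, zero_mul, sub_zero]

lemma exists_memH_ins_eq_mul {a : BMat A m n} {a' : BMat A m n'} (ha : IsUnit a)
    (ha' : IsUnit a') : ∃ Γ Γ', memH m d (n + n') hd Γ ∧ memH m d (n + n') hd Γ' ∧
      Γ * Γ' = 1 ∧ ins hd u v a a' X = (1 + insCorner hd u v X) * dsum a a' * Γ := by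
  obtain ⟨a₁, h, -⟩ := isUnit_iff_exists.mp ha
  obtain ⟨a₁', h', -⟩ := isUnit_iff_exists.mp ha'
  set M := dsum a₁ a₁' * insCorner hd u v X * dsum a a' * headProj m d (n + n')
  have hcol : ∀ i j : Fin m, m - d ≤ (j : ℕ) → M i j = 0 := fun i j hj => by
    simp [M, headProj, mul_diagonal, show ¬(j : ℕ) < m - d by omega]
  have hM : M * M = 0 := by
    have regroup : M * M = dsum a₁ a₁' * (insCorner hd u v X *
        (dsum a a' * headProj m d (n + n') * dsum a₁ a₁') * insCorner hd u v X) *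
          dsum a a' * headProj m d (n + n') := by
      simp only [M]; noncomm_ring
    rw [regroup, ← dsum_headProj, dsum_mul, dsum_mul, insCorner_mul_dsum_mul_insCorner,
      mul_zero, zero_mul, zero_mul]
  refine ⟨1 - M, 1 + M, ?_, memH_one_add hd hcol hM, ?_, ins_eq_mul hd u v X h h'⟩
  · rw [sub_eq_add_neg]
    exact memH_one_add hd (fun i j hj => by rw [neg_apply, hcol i j hj, neg_zero])
      (by rw [neg_mul_neg, hM])
  · rw [show (1 - M) * (1 + M) = 1 - M * M by noncomm_ring, hM, sub_zero]

end Insertion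

section Grel

variable {A : Type} [Ring A] {m d N : ℕ} (hd : d ≤ m)

lemma grel_trans {x y z : BMat A m N} (hxy : grel m d N hd x y) (hyz : grel m d N hd y z) :
    grel m d N hd x z := by
  obtain ⟨Γ, hΓ, rfl⟩ := hxy
  obtain ⟨Γ', hΓ', rfl⟩ := hyz
  exact ⟨Γ' * Γ, memH_mul hd hΓ' hΓ, mul_assoc _ _ _⟩

variable {n n' : ℕ} (u : Fin (m - d)) (v : Fin d) (X : Matrix (Fin n) (Fin n') A)
  {a : BMat A m n} {a' : BMat A m n'}

lemma ins_grel_one_add_insCorner_mul_dsum (ha : IsUnit a) (ha' : IsUnit a') :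
    grel m d (n + n') hd (ins hd u v a a' X) ((1 + insCorner hd u v X) * dsum a a') := by
  obtain ⟨Γ, -, hΓ, -, -, heq⟩ := exists_memH_ins_eq_mul hd u v X ha ha'
  exact ⟨Γ, hΓ, heq⟩

lemma one_add_insCorner_mul_dsum_grel_ins (ha : IsUnit a) (ha' : IsUnit a') :
    grel m d (n + n') hd ((1 + insCorner hd u v X) * dsum a a') (ins hd u v a a' X) := by
  obtain ⟨Γ, Γ', -, hΓ', hinv, heq⟩ := exists_memH_ins_eq_mul hd u v X ha ha'
  exact ⟨Γ', hΓ', by rw [heq, mul_assoc _ Γ, hinv, mul_one]⟩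

end Grel

theorem ins_well_defined_general {A : Type} [Ring A]
    (m d : ℕ) (hd : d ≤ m) (u : Fin (m - d)) (v : Fin d) {n n' : ℕ}
    (a b : BMat A m n) (a' b' : BMat A m n')
    (hb : IsUnit b) (hb' : IsUnit b')
    (h : grel m d n hd a b) (h' : grel m d n' hd a' b')
    (X : Matrix (Fin n) (Fin n') A) :
    grel m d (n + n') hd (ins hd u v a a' X) (ins hd u v b b' X) := by
  obtain ⟨Γ, hΓ, rfl⟩ := h
  obtain ⟨Γ', hΓ', rfl⟩ := h'
  have hmid : grel m d (n + n') hd ((1 + insCorner hd u v X) * dsum (b * Γ) (b' * Γ'))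
      ((1 + insCorner hd u v X) * dsum b b') :=
    ⟨dsum Γ Γ', memH_dsum hd hΓ hΓ', by rw [← dsum_mul, mul_assoc]⟩
  exact grel_trans hd
    (ins_grel_one_add_insCorner_mul_dsum hd u v X (hb.mul hΓ.1) (hb'.mul hΓ'.1))
    (grel_trans hd hmid (one_add_insCorner_mul_dsum_grel_ins hd u v X hb hb'))

/-- `(σ;σ')_{u,v}(X)` is independent of the choice of representatives. -/
theorem ins_well_defined {R : Type} [CommRing R] {A : Type} [Ring A] [Algebra R A]
    (m d : ℕ) (hd1 : 1 ≤ d) (hd : d ≤ m) (u : Fin (m - d)) (v : Fin d) {n n' : ℕ}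
    (a b : BMat A m n) (a' b' : BMat A m n')
    (ha : IsUnit a) (hb : IsUnit b) (ha' : IsUnit a') (hb' : IsUnit b')
    (h : grel m d n hd a b) (h' : grel m d n' hd a' b')
    (X : Matrix (Fin n) (Fin n') A) :
    grel m d (n + n') hd (ins hd u v a a' X) (ins hd u v b b' X) :=
  ins_well_defined_general m d hd u v a b a' b' hb hb' h h' X
end
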